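/- arXiv:1812.01277 — 2 statements merged into one kernel-verified Lean document; each statement's English description precedes it below -/
import Mathlib

section
/- Assume N_F > 1 and let Λ > 0, μ_S > 0, γ > 0, M_S* := Λ/μ_S. Call (M,F) with M > 0, F > 0 a positive equilibrium of the SIT model with constant releases if rρ·(F M/(M+γM_S*))·e^{−β(M+F)} = μ_M M and (1−r)ρ·(F M/(M+γM_S*))·e^{−β(M+F)} = μ_F F. Define Λ^crit := 2·(μ_S/(βγ))·φ^crit/(1 + N_F/N_M), where φ^crit is the unique positive solution of 1 + φ(1 + √(1 + 2/φ)) = N_F·exp(−2/(1 + √(1 + 2/φ))). Then there exist exactly two distinct positive equilibria if 0 < Λ < Λ^crit, exactly one positive equilibrium if Λ = Λ^crit, and no positive equilibrium if Λ > Λ^crit. -/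
/-!
Dividing the two equilibrium equations gives `N_M F = N_F M`, so `F = k M` with `k = N_F / N_M`,
and the female equation becomes `G(M) := N_F M e^{-bM} - M = γ M_S*` with `b = β (1 + k)`.
`G` vanishes at `0`, increases up to the unique zero `M₀` of `G'` and then decreases to `-∞`, so
there are two, one or no positive solutions according as `γ M_S*` is below, at or above `G(M₀)`.
With `x = b M₀` the critical-point equation `N_F (1 - x) e^{-x} = 1` shows that
`φ = b G(M₀) / 2 = x² / (2 (1 - x))` solves the equation defining `φ^crit`
(because `1 + √(1 + 2/φ) = 2/x`), hence `G(M₀) = 2 φ^crit / b = γ Λ^crit / μ_S`.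
-/

/-- Equilibrium equations of the SIT model with constant releases
(sterile male population at its equilibrium value `MS* = Λ/μS`). -/
def isSITEquil (r ρ β μM μF γ MSstar M F : ℝ) : Prop :=
  r * ρ * (F * M / (M + γ * MSstar)) * Real.exp (-(β * (M + F))) = μM * M ∧
  (1 - r) * ρ * (F * M / (M + γ * MSstar)) * Real.exp (-(β * (M + F))) = μF * F

open Real Set Filter

section Unimodal

variable {f : ℝ → ℝ} {m c : ℝ}

theorem lt_of_unimodal (hmono : StrictMonoOn f (Icc 0 m)) (hanti : StrictAntiOn f (Ici m))
    {x : ℝ} (hx : 0 ≤ x) (hxm : x ≠ m) : f x < f m := by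
  rcases hxm.lt_or_gt with h | h
  · exact hmono ⟨hx, h.le⟩ ⟨hx.trans h.le, le_rfl⟩ h
  · exact hanti self_mem_Ici h.le h

theorem setOf_pos_eq_max_eq_singleton (hm : 0 < m) (hmono : StrictMonoOn f (Icc 0 m))
    (hanti : StrictAntiOn f (Ici m)) : {x | 0 < x ∧ f x = f m} = {m} := by
  ext x
  refine ⟨fun ⟨hx, hfx⟩ => ?_, fun hx => ⟨hx ▸ hm, hx ▸ rfl⟩⟩
  by_contra hxm
  exact (lt_of_unimodal hmono hanti hx.le hxm).ne hfx

theorem setOf_pos_eq_eq_empty_of_max_lt (hmono : StrictMonoOn f (Icc 0 m))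
    (hanti : StrictAntiOn f (Ici m)) (hc : f m < c) : {x | 0 < x ∧ f x = c} = ∅ := by
  refine eq_empty_of_forall_notMem fun x ⟨hx, hfx⟩ => ?_
  rcases eq_or_ne x m with rfl | hxm
  · exact hc.ne hfx
  · exact (hc.trans (hfx ▸ lt_of_unimodal hmono hanti hx.le hxm)).false

theorem encard_setOf_pos_eq_eq_two_of_lt_max (hf : ContinuousOn f (Ici 0)) (hm : 0 ≤ m)
    (hmono : StrictMonoOn f (Icc 0 m)) (hanti : StrictAntiOn f (Ici m))
    (htop : Tendsto f atTop atBot) (h0 : f 0 < c) (hc : c < f m) :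
    {x | 0 < x ∧ f x = c}.encard = 2 := by
  obtain ⟨T, hTc, hmT⟩ :=
    ((htop.eventually_lt_atBot c).and (eventually_ge_atTop m)).exists
  obtain ⟨x₁, hx₁, hfx₁⟩ := intermediate_value_Ioo hm (hf.mono Icc_subset_Ici_self) ⟨h0, hc⟩
  obtain ⟨x₂, hx₂, hfx₂⟩ :=
    intermediate_value_Ioo' hmT (hf.mono fun y hy => hm.trans hy.1) ⟨hTc, hc⟩
  have hroots : {x | 0 < x ∧ f x = c} = {x₁, x₂} := by
    ext x
    refine ⟨fun ⟨hx, hfx⟩ => ?_, ?_⟩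
    · rcases le_total x m with h | h
      · exact .inl (hmono.injOn ⟨hx.le, h⟩ (Ioo_subset_Icc_self hx₁) (hfx.trans hfx₁.symm))
      · exact .inr (hanti.injOn h hx₂.1.le (hfx.trans hfx₂.symm))
    · rintro (rfl | rfl)
      exacts [⟨hx₁.1, hfx₁⟩, ⟨hm.trans_lt hx₂.1, hfx₂⟩]
  rw [hroots, encard_pair (hx₁.2.trans hx₂.1).ne]

end Unimodal

noncomputable def netGrowth (a b M : ℝ) : ℝ := a * M * exp (-(b * M)) - M

section NetGrowth

variable {a b : ℝ}

theorem continuous_netGrowth : Continuous (netGrowth a b) := by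
  unfold netGrowth
  fun_prop

@[simp]
theorem netGrowth_zero : netGrowth a b 0 = 0 := by
  simp [netGrowth]

theorem hasDerivAt_netGrowth (M : ℝ) :
    HasDerivAt (netGrowth a b) (a * ((1 - b * M) * exp (-(b * M))) - 1) M := by
  have hexp : HasDerivAt (fun M => exp (-(b * M))) (exp (-(b * M)) * -b) M := by
    simpa using ((hasDerivAt_id M).const_mul b).neg.exp
  exact ((((hasDerivAt_id' M).const_mul a).mul hexp).sub (hasDerivAt_id' M)).congr_deriv
    (by ring)

theorem tendsto_netGrowth_atTop (hb : 0 < b) : Tendsto (netGrowth a b) atTop atBot := by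
  have hdecay := tendsto_exp_neg_atTop_nhds_zero.comp (tendsto_id.const_mul_atTop hb)
  have hexp : Tendsto (fun M => a * exp (-(b * M)) - 1) atTop (nhds (a * 0 - 1)) :=
    (hdecay.const_mul a).sub_const 1
  convert tendsto_id.atTop_mul_neg (by norm_num) hexp using 1
  ext M
  simp only [netGrowth, id]
  ring

theorem strictAntiOn_one_sub_mul_exp_neg :
    StrictAntiOn (fun x => (1 - x) * exp (-x)) (Iic 1) := fun x _ y hy hxy =>
  mul_lt_mul'' (by linarith) (exp_lt_exp.2 (neg_lt_neg hxy)) (by linarith [mem_Iic.1 hy])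
    (exp_pos _).le

theorem exists_netGrowth_unimodal (ha : 1 < a) (hb : 0 < b) :
    ∃ M₀, 0 < M₀ ∧ a * ((1 - b * M₀) * exp (-(b * M₀))) = 1 ∧
      StrictMonoOn (netGrowth a b) (Icc 0 M₀) ∧ StrictAntiOn (netGrowth a b) (Ici M₀) := by
  set h : ℝ → ℝ := fun x => a * ((1 - x) * exp (-x)) with h_def
  have hanti : StrictAntiOn h (Iic 1) := fun x hx y hy hxy =>
    mul_lt_mul_of_pos_left (strictAntiOn_one_sub_mul_exp_neg hx hy hxy) (by linarith)
  obtain ⟨x, ⟨hx0, hx1⟩, hhx⟩ : ∃ x ∈ Ioo 0 1, h x = 1 :=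
    intermediate_value_Ioo' zero_le_one (by fun_prop) (by simpa [h_def] using ha)
  have hbx : b * (x / b) = x := mul_div_cancel₀ x hb.ne'
  refine ⟨x / b, by positivity, by rw [hbx]; exact hhx, ?_, ?_⟩
  · refine strictMonoOn_of_deriv_pos (convex_Icc _ _) continuous_netGrowth.continuousOn
      fun M hM => ?_
    rw [interior_Icc] at hM
    have hbM : b * M < x := (lt_div_iff₀' hb).1 hM.2
    rw [(hasDerivAt_netGrowth M).deriv]
    change 0 < h (b * M) - 1
    linarith [hanti (mem_Iic.2 (by linarith)) (mem_Iic.2 hx1.le) hbM]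
  · refine strictAntiOn_of_deriv_neg (convex_Ici _) continuous_netGrowth.continuousOn
      fun M hM => ?_
    rw [interior_Ici] at hM
    have hbM : x < b * M := by rwa [mem_Ioi, div_lt_iff₀' hb] at hM
    rw [(hasDerivAt_netGrowth M).deriv]
    change h (b * M) - 1 < 0
    rcases le_or_gt (b * M) 1 with hle | hgt
    · linarith [hanti (mem_Iic.2 hx1.le) hle hbM]
    · have : h (b * M) < 0 :=
        mul_neg_of_pos_of_neg (by linarith) (mul_neg_of_neg_of_pos (by linarith) (exp_pos _))
      linarith

end NetGrowth

section CriticalValue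

variable {a b x : ℝ}

theorem one_add_sqrt_one_add_two_div (hx0 : 0 < x) (hx1 : x < 1) :
    1 + √(1 + 2 / (x ^ 2 / (2 * (1 - x)))) = 2 / x := by
  have hsq : 1 + 2 / (x ^ 2 / (2 * (1 - x))) = ((2 - x) / x) ^ 2 := by
    field_simp
    ring
  rw [hsq, sqrt_sq (div_nonneg (by linarith) hx0.le)]
  field_simp
  ring

theorem critical_phi_equation (hx0 : 0 < x) (hx1 : x < 1)
    (hcrit : a * ((1 - x) * exp (-x)) = 1) :
    1 + x ^ 2 / (2 * (1 - x)) * (1 + √(1 + 2 / (x ^ 2 / (2 * (1 - x))))) =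
      a * exp (-(2 / (1 + √(1 + 2 / (x ^ 2 / (2 * (1 - x))))))) := by
  have h1x : 1 - x ≠ 0 := by linarith
  rw [one_add_sqrt_one_add_two_div hx0 hx1, div_div_cancel₀ two_ne_zero]
  field_simp
  linear_combination -hcrit

theorem netGrowth_critical_eq {M₀ φcrit : ℝ} (ha : 0 < a) (hb : 0 < b) (hM₀ : 0 < M₀)
    (hcrit : a * ((1 - b * M₀) * exp (-(b * M₀))) = 1)
    (huniq : ∀ φ : ℝ, 0 < φ → 1 + φ * (1 + √(1 + 2 / φ)) =
      a * exp (-(2 / (1 + √(1 + 2 / φ)))) → φ = φcrit) :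
    netGrowth a b M₀ = 2 * φcrit / b := by
  obtain ⟨x, hx⟩ : ∃ x, b * M₀ = x := ⟨_, rfl⟩
  rw [hx] at hcrit
  obtain rfl : M₀ = x / b := by rw [← hx, mul_div_cancel_left₀ _ hb.ne']
  have hx0 : 0 < x := by rw [← hx]; positivity
  have h1x : 0 < 1 - x :=
    pos_of_mul_pos_left (pos_of_mul_pos_right (hcrit ▸ one_pos) ha.le) (exp_pos _).le
  rw [← huniq _ (by positivity) (critical_phi_equation hx0 (by linarith) hcrit)]
  unfold netGrowth
  rw [hx]
  field_simp
  linear_combination hcrit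

end CriticalValue

noncomputable def basicOffspringF (r ρ μF : ℝ) : ℝ := (1 - r) * ρ / μF

noncomputable def basicOffspringM (r ρ μM : ℝ) : ℝ := r * ρ / μM

section SIT

variable {r ρ β μM μF γ S M F : ℝ}

theorem isSITEquil_iff_balance (hM : M ≠ 0) (hF : F ≠ 0) (hμM : μM ≠ 0) (hμF : μF ≠ 0)
    (hD : M + γ * S ≠ 0) :
    isSITEquil r ρ β μM μF γ S M F ↔
      basicOffspringM r ρ μM * F * exp (-(β * (M + F))) = M + γ * S ∧
        basicOffspringF r ρ μF * M * exp (-(β * (M + F))) = M + γ * S := by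
  unfold isSITEquil basicOffspringM basicOffspringF
  refine and_congr ⟨fun h => ?_, fun h => ?_⟩ ⟨fun h => ?_, fun h => ?_⟩ <;>
    field_simp at h ⊢ <;> linear_combination h

theorem isSITEquil_iff_netGrowth (hM : 0 < M) (hF : 0 < F) (hμM : μM ≠ 0) (hμF : μF ≠ 0)
    (hNM : 0 < basicOffspringM r ρ μM) (hS : 0 ≤ γ * S) :
    isSITEquil r ρ β μM μF γ S M F ↔
      F = basicOffspringF r ρ μF / basicOffspringM r ρ μM * M ∧
        netGrowth (basicOffspringF r ρ μF)
          (β * (1 + basicOffspringF r ρ μF / basicOffspringM r ρ μM)) M = γ * S := by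
  set NF := basicOffspringF r ρ μF
  set NM := basicOffspringM r ρ μM
  rw [isSITEquil_iff_balance hM.ne' hF.ne' hμM hμF (by positivity)]
  have hE := exp_pos (-(β * (M + F)))
  have hexp (hFM : F = NF / NM * M) : β * (1 + NF / NM) * M = β * (M + F) := by
    rw [hFM]; ring
  unfold netGrowth
  constructor
  · rintro ⟨hm, hf⟩
    have hFM : F = NF / NM * M := by
      rw [div_mul_eq_mul_div, eq_div_iff hNM.ne']
      linarith [mul_right_cancel₀ hE.ne' (hm.trans hf.symm)]
    rw [hexp hFM]
    exact ⟨hFM, by linarith⟩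
  · rintro ⟨hFM, hG⟩
    rw [hexp hFM] at hG
    have hbalance : NM * F = NF * M := by
      rw [hFM]
      field_simp
    exact ⟨by rw [hbalance]; linarith, by linarith⟩

theorem encard_setOf_isSITEquil (hμM : μM ≠ 0) (hμF : μF ≠ 0)
    (hNM : 0 < basicOffspringM r ρ μM) (hNF : 0 < basicOffspringF r ρ μF) (hS : 0 ≤ γ * S) :
    {p : ℝ × ℝ | 0 < p.1 ∧ 0 < p.2 ∧ isSITEquil r ρ β μM μF γ S p.1 p.2}.encard =
      {M | 0 < M ∧ netGrowth (basicOffspringF r ρ μF)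
        (β * (1 + basicOffspringF r ρ μF / basicOffspringM r ρ μM)) M = γ * S}.encard := by
  set k := basicOffspringF r ρ μF / basicOffspringM r ρ μM
  have himage : {p : ℝ × ℝ | 0 < p.1 ∧ 0 < p.2 ∧ isSITEquil r ρ β μM μF γ S p.1 p.2} =
      (fun M => (M, k * M)) ''
        {M | 0 < M ∧ netGrowth (basicOffspringF r ρ μF) (β * (1 + k)) M = γ * S} := by
    ext ⟨M, F⟩
    simp only [mem_ofPred_eq, mem_image, Prod.mk.injEq]
    constructor
    · rintro ⟨hM, hF, h⟩
      obtain ⟨hFM, hG⟩ := (isSITEquil_iff_netGrowth hM hF hμM hμF hNM hS).1 h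
      exact ⟨M, ⟨hM, hG⟩, rfl, hFM.symm⟩
    · rintro ⟨M, ⟨hM, hG⟩, rfl, rfl⟩
      have hF : 0 < k * M := by positivity
      exact ⟨hM, hF, (isSITEquil_iff_netGrowth hM hF hμM hμF hNM hS).2 ⟨rfl, hG⟩⟩
  rw [himage, Function.Injective.encard_image fun x y h => congrArg Prod.fst h]

end SIT

theorem stmt_6_general (r ρ β μM μF μS γ Λ φcrit : ℝ)
    (hr0 : 0 < r) (hρ : 0 < ρ) (hβ : 0 < β)
    (hμM : 0 < μM) (hμF : 0 < μF) (hμS : 0 < μS) (hγ : 0 < γ)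
    (hNF : 1 < (1 - r) * ρ / μF) (hΛ : 0 < Λ)
    (hφuniq : ∀ φ : ℝ, 0 < φ →
      1 + φ * (1 + Real.sqrt (1 + 2 / φ)) =
        ((1 - r) * ρ / μF) * Real.exp (-(2 / (1 + Real.sqrt (1 + 2 / φ)))) → φ = φcrit) :
    (Λ < 2 * (μS / (β * γ)) * φcrit / (1 + ((1 - r) * ρ / μF) / (r * ρ / μM)) →
      {p : ℝ × ℝ | 0 < p.1 ∧ 0 < p.2 ∧
        isSITEquil r ρ β μM μF γ (Λ / μS) p.1 p.2}.encard = 2) ∧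
    (Λ = 2 * (μS / (β * γ)) * φcrit / (1 + ((1 - r) * ρ / μF) / (r * ρ / μM)) →
      {p : ℝ × ℝ | 0 < p.1 ∧ 0 < p.2 ∧
        isSITEquil r ρ β μM μF γ (Λ / μS) p.1 p.2}.encard = 1) ∧
    (2 * (μS / (β * γ)) * φcrit / (1 + ((1 - r) * ρ / μF) / (r * ρ / μM)) < Λ →
      {p : ℝ × ℝ | 0 < p.1 ∧ 0 < p.2 ∧
        isSITEquil r ρ β μM μF γ (Λ / μS) p.1 p.2}.encard = 0) := by
  rw [show (1 - r) * ρ / μF = basicOffspringF r ρ μF from rfl] at hNF hφuniq ⊢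
  rw [show r * ρ / μM = basicOffspringM r ρ μM from rfl]
  set NF := basicOffspringF r ρ μF
  have hNM : 0 < basicOffspringM r ρ μM := by unfold basicOffspringM; positivity
  set NM := basicOffspringM r ρ μM
  set Λcrit := 2 * (μS / (β * γ)) * φcrit / (1 + NF / NM) with hΛcrit
  have hb : 0 < β * (1 + NF / NM) := by positivity
  obtain ⟨M₀, hM₀, hcrit, hmono, hanti⟩ := exists_netGrowth_unimodal hNF hb
  have hmax : netGrowth NF (β * (1 + NF / NM)) M₀ = γ * (Λcrit / μS) := by
    rw [netGrowth_critical_eq (by linarith) hb hM₀ hcrit hφuniq, hΛcrit]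
    field_simp
  rw [encard_setOf_isSITEquil hμM.ne' hμF.ne' hNM (by linarith) (by positivity)]
  refine ⟨fun h => ?_, fun h => ?_, fun h => ?_⟩
  · refine encard_setOf_pos_eq_eq_two_of_lt_max continuous_netGrowth.continuousOn hM₀.le hmono
      hanti (tendsto_netGrowth_atTop hb) (by rw [netGrowth_zero]; positivity) ?_
    rw [hmax]
    gcongr
  · rw [h, ← hmax, setOf_pos_eq_max_eq_singleton hM₀ hmono hanti, encard_singleton]
  · rw [setOf_pos_eq_eq_empty_of_max_lt hmono hanti (by rw [hmax]; gcongr), encard_empty]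

theorem stmt_6 (r ρ β μM μF μS γ Λ φcrit : ℝ)
    (hr0 : 0 < r) (hr1 : r < 1) (hρ : 0 < ρ) (hβ : 0 < β)
    (hμM : 0 < μM) (hμF : 0 < μF) (hμS : 0 < μS) (hγ : 0 < γ)
    (hNF : 1 < (1 - r) * ρ / μF) (hΛ : 0 < Λ)
    (hφpos : 0 < φcrit)
    (hφroot : 1 + φcrit * (1 + Real.sqrt (1 + 2 / φcrit)) =
      ((1 - r) * ρ / μF) * Real.exp (-(2 / (1 + Real.sqrt (1 + 2 / φcrit)))))
    (hφuniq : ∀ φ : ℝ, 0 < φ →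
      1 + φ * (1 + Real.sqrt (1 + 2 / φ)) =
        ((1 - r) * ρ / μF) * Real.exp (-(2 / (1 + Real.sqrt (1 + 2 / φ)))) → φ = φcrit) :
    (Λ < 2 * (μS / (β * γ)) * φcrit / (1 + ((1 - r) * ρ / μF) / (r * ρ / μM)) →
      {p : ℝ × ℝ | 0 < p.1 ∧ 0 < p.2 ∧
        isSITEquil r ρ β μM μF γ (Λ / μS) p.1 p.2}.encard = 2) ∧
    (Λ = 2 * (μS / (β * γ)) * φcrit / (1 + ((1 - r) * ρ / μF) / (r * ρ / μM)) →
      {p : ℝ × ℝ | 0 < p.1 ∧ 0 < p.2 ∧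
        isSITEquil r ρ β μM μF γ (Λ / μS) p.1 p.2}.encard = 1) ∧
    (2 * (μS / (β * γ)) * φcrit / (1 + ((1 - r) * ρ / μF) / (r * ρ / μM)) < Λ →
      {p : ℝ × ℝ | 0 < p.1 ∧ 0 < p.2 ∧
        isSITEquil r ρ β μM μF γ (Λ / μS) p.1 p.2}.encard = 0) :=
  stmt_6_general r ρ β μM μF μS γ Λ φcrit hr0 hρ hβ hμM hμF hμS hγ hNF hΛ hφuniq
end

section
/- Let τ > 0 and assume Λ ≥ Λ^crit_per := ((cosh(μ_Sτ) − 1)/(μ_Sτ²))·(1/(eβγ))·min{2N_M, 2N_F, max{r,1−r}·max{N_M/r, N_F/(1−r)}}. Then every solution of the τ-periodic SIT system with nonnegative initial data converges exponentially to (0,0): if M, F : [0,∞) → ℝ are continuously differentiable, nonnegative, and satisfy M'(t) = rρ·(F(t)M(t)/(M(t)+γM_S^per(t)))·e^{−β(M(t)+F(t))} − μ_M M(t) and F'(t) = (1−r)ρ·(F(t)M(t)/(M(t)+γM_S^per(t)))·e^{−β(M(t)+F(t))} − μ_F F(t) for all t ≥ 0, then there exist constants C > 0 and ε > 0 such that M(t)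 + F(t) ≤ C e^{−εt} for all t ≥ 0. -/
/-!
Write `N = M + F` and `S = M_S^per`. Since `y e^{-βy} ≤ 1/(eβ)`, the birth term
`F M e^{-β(M+F)} / (M + γ S)` is at most `M/(eβγS)`, at most `F/(eβγS)` and at most `N/(4eβγS)`,
each time up to a factor that stays below `1` while `M`, `F`, resp. `N` stays away from `0`.
The rate `1/S` is an exponential sawtooth with mean `2 (cosh (μ_S τ) - 1) / (μ_S τ² Λ)` over a
period, so each of the three terms of the threshold makes one of `M`, `F`, `N` a subsolution of
`x' = (w a(t) - μ) x` with `a` of mean at most `μ` and `w ≤ 1`. Comparison with the explicit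
primitive of `a` shows that `x` drops below any level (this is where `w < 1` is needed, the
threshold allowing equality) and then stays within a factor `e^{2μτ}` of it, so `x → 0`.
Hence `min M F → 0`; once it is small, the birth term is at most
`min M F · N / (γ S) ≤ μ_F N / (2ρ)`, so `N' ≤ -μ_F N / 2` and `N` decays exponentially.
-/

/-- The periodic sterile male population resulting from periodic impulsive releases. -/
noncomputable def MSper (μS τ Λ t : ℝ) : ℝ :=
  τ * Λ * Real.exp (-(μS * (t - (⌊t / τ⌋ : ℝ) * τ))) / (1 - Real.exp (-(μS * τ)))

open Real Set Filter Topology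

theorem le_mul_exp_sub_of_hasDerivWithinAt {x x' G g : ℝ → ℝ} {a b : ℝ} (hab : a ≤ b)
    (hx : ContinuousOn x (Icc a b)) (hx' : ∀ t ∈ Ico a b, HasDerivWithinAt x (x' t) (Ici t) t)
    (hG : ContinuousOn G (Icc a b)) (hG' : ∀ t ∈ Ico a b, HasDerivWithinAt G (g t) (Ici t) t)
    (hle : ∀ t ∈ Ico a b, x' t ≤ g t * x t) :
    x b ≤ x a * exp (G b - G a) := by
  have hy : x b * exp (-G b) ≤ x a * exp (-G a) :=
    image_le_of_deriv_right_le_deriv_boundary (f := fun t => x t * exp (-G t))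
      (B := fun _ => x a * exp (-G a)) (B' := fun _ => 0) (hx.mul hG.neg.rexp)
      (fun t ht => (hx' t ht).mul (hG' t ht).neg.exp) le_rfl continuousOn_const
      (fun t _ => hasDerivWithinAt_const _ _ _)
      (fun t ht => by simp only [Pi.neg_apply]; nlinarith [hle t ht, exp_pos (-G t)]) ⟨hab, le_rfl⟩
  calc x b = x b * exp (-G b) * exp (G b) := by rw [mul_assoc, ← exp_add]; simp
    _ ≤ x a * exp (-G a) * exp (G b) := by gcongr
    _ = x a * exp (G b - G a) := by rw [mul_assoc, ← exp_add]; ring_nf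

theorem exists_le_mul_exp_of_deriv_le {x x' : ℝ → ℝ} {ε t₁ : ℝ} (hε : 0 ≤ ε) (ht₁ : 0 ≤ t₁)
    (hx : ∀ t ≥ 0, HasDerivAt x (x' t) t) (hdecay : ∀ t ≥ t₁, x' t ≤ -ε * x t) :
    ∃ C > 0, ∀ t ≥ 0, x t ≤ C * exp (-(ε * t)) := by
  obtain ⟨K, hK⟩ := isCompact_Icc.exists_bound_of_continuousOn
    fun t ht => (hx t ht.1).continuousAt.continuousWithinAt
  have hK0 : 0 ≤ K := (norm_nonneg _).trans (hK 0 ⟨le_rfl, ht₁⟩)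
  refine ⟨(K + 1) * exp (ε * t₁), by positivity, fun t ht => ?_⟩
  have hC : (K + 1) * exp (ε * t₁) * exp (-(ε * t)) = (K + 1) * exp (-ε * (t - t₁)) := by
    rw [mul_assoc, ← exp_add]; ring_nf
  rw [hC]
  rcases le_total t t₁ with htt₁ | ht₁t
  · have h1 : 1 ≤ exp (-ε * (t - t₁)) := one_le_exp (by nlinarith)
    have h2 : x t ≤ K := (le_abs_self _).trans (hK t ⟨ht, htt₁⟩)
    nlinarith
  · have hgron := le_mul_exp_sub_of_hasDerivWithinAt ht₁t
      (fun s hs => (hx s (ht₁.trans hs.1)).continuousAt.continuousWithinAt)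
      (fun s hs => (hx s (ht₁.trans hs.1)).hasDerivWithinAt)
      (continuous_const.mul continuous_id).continuousOn
      (fun s _ => ((hasDerivAt_id s).const_mul (-ε)).hasDerivWithinAt)
      (fun s hs => by simpa using hdecay s hs.1)
    have h2 : x t₁ ≤ K := (le_abs_self _).trans (hK t₁ ⟨ht₁, le_rfl⟩)
    calc x t ≤ x t₁ * exp (-ε * t - -ε * t₁) := by simpa using hgron
      _ ≤ (K + 1) * exp (-ε * (t - t₁)) := by
        rw [show -ε * t - -ε * t₁ = -ε * (t - t₁) by ring]
        gcongr; linarith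

/-- The floor term compensates the jumps of the exponential at multiples of `τ`. -/
noncomputable def sawtoothExpPrimitive (q τ t : ℝ) : ℝ :=
  ((exp (q * τ) - 1) * ⌊t / τ⌋ + exp (q * (t - ⌊t / τ⌋ * τ))) / q

section sawtooth

variable {q τ : ℝ}

theorem continuous_sawtoothExpPrimitive (hτ : τ ≠ 0) : Continuous (sawtoothExpPrimitive q τ) := by
  set h : ℝ → ℝ := fun u => exp (q * τ * u) - (exp (q * τ) - 1) * u
  have hfun : sawtoothExpPrimitive q τ =
      fun t => ((exp (q * τ) - 1) * (t / τ) + (h ∘ Int.fract) (t / τ)) / q := by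
    funext t
    have hsaw : t - ⌊t / τ⌋ * τ = τ * Int.fract (t / τ) := by
      rw [Int.fract]; field_simp
    simp only [sawtoothExpPrimitive, Function.comp, h, hsaw, Int.fract]
    ring_nf
  have hh : Continuous (h ∘ Int.fract) :=
    ContinuousOn.comp_fract'' (by fun_prop) (by simp [h])
  rw [hfun]
  exact ((continuous_const.mul (continuous_id.div_const τ)).add
    (hh.comp (continuous_id.div_const τ))).div_const q

theorem hasDerivWithinAt_sawtoothExpPrimitive (hq : q ≠ 0) (hτ : 0 < τ) (t : ℝ) :
    HasDerivWithinAt (sawtoothExpPrimitive q τ) (exp (q * (t - ⌊t / τ⌋ * τ))) (Ici t) t := by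
  set n := ⌊t / τ⌋
  have hfloor : ∀ᶠ s in 𝓝[≥] t, ⌊s / τ⌋ = n := by
    have ht : t < (n + 1) * τ := by
      rw [← div_lt_iff₀ hτ]; exact Int.lt_floor_add_one _
    filter_upwards [Ico_mem_nhdsGE ht] with s hs
    rw [Int.floor_eq_iff]
    constructor
    · exact (Int.floor_le _).trans (by gcongr; exact hs.1)
    · rw [div_lt_iff₀ hτ]; exact hs.2
  have hg : HasDerivAt (fun s => ((exp (q * τ) - 1) * n + exp (q * (s - n * τ))) / q)
      (exp (q * (t - n * τ))) t := by
    refine ((((hasDerivAt_id' t).sub_const (n * τ)).const_mul q).exp.const_add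
      ((exp (q * τ) - 1) * n) |>.div_const q).congr_deriv ?_
    field_simp
  exact hg.hasDerivWithinAt.congr_of_eventuallyEq
    (hfloor.mono fun s hs => by simp only [sawtoothExpPrimitive, hs]) rfl

theorem sawtoothExpPrimitive_sub_le (hq : 0 < q) (hτ : 0 < τ) (s t : ℝ) :
    sawtoothExpPrimitive q τ t - sawtoothExpPrimitive q τ s ≤
      (exp (q * τ) - 1) / q * ((t - s) / τ + 2) := by
  have hfloor : (⌊t / τ⌋ : ℝ) - ⌊s / τ⌋ ≤ (t - s) / τ + 1 := by
    linarith [Int.floor_le (t / τ), Int.lt_floor_add_one (s / τ), sub_div t s τ]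
  have hexp_t : exp (q * (t - ⌊t / τ⌋ * τ)) ≤ exp (q * τ) := by
    gcongr; exact (Int.sub_floor_div_mul_lt t hτ).le
  have hexp_s : 1 ≤ exp (q * (s - ⌊s / τ⌋ * τ)) :=
    one_le_exp (mul_nonneg hq.le (Int.sub_floor_div_mul_nonneg s hτ))
  have hE : 0 ≤ exp (q * τ) - 1 := by
    linarith [one_le_exp (mul_nonneg hq.le hτ.le)]
  rw [sawtoothExpPrimitive, sawtoothExpPrimitive, ← sub_div, div_mul_eq_mul_div]
  gcongr
  nlinarith [mul_le_mul_of_nonneg_left hfloor hE]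

end sawtooth

theorem exists_le_of_deriv_le_mul {x x' a A : ℝ → ℝ} {μ C θ δ : ℝ} (hμ : 0 < μ)
    (hθ₀ : 0 ≤ θ) (hθ₁ : θ < 1) (hδ : 0 < δ) (hA : Continuous A)
    (hA' : ∀ t, HasDerivWithinAt A (a t) (Ici t) t)
    (hA_le : ∀ s t, s ≤ t → A t - A s ≤ μ * (t - s) + C)
    (hx : ∀ t ≥ 0, HasDerivAt x (x' t) t)
    (hle : ∀ t ≥ 0, δ < x t → x' t ≤ (θ * a t - μ) * x t) :
    ∃ t ≥ 0, x t ≤ δ := by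
  by_contra! hlarge
  have hbound : ∀ T ≥ 0, x T ≤ x 0 * exp (θ * C - (1 - θ) * μ * T) := by
    intro T hT
    have hgron := le_mul_exp_sub_of_hasDerivWithinAt (G := fun s => θ * A s - μ * s) hT
      (fun s hs => (hx s hs.1).continuousAt.continuousWithinAt)
      (fun s hs => (hx s hs.1).hasDerivWithinAt)
      ((continuous_const.mul hA).sub (continuous_const.mul continuous_id)).continuousOn
      (fun s _ => ((hA' s).const_mul θ).sub ((hasDerivAt_id' s).const_mul μ).hasDerivWithinAt)
      (fun s hs => by simpa using hle s hs.1 (hlarge s hs.1))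
    have hexp : θ * A T - μ * T - (θ * A 0 - μ * 0) ≤ θ * C - (1 - θ) * μ * T := by
      nlinarith [hA_le 0 T hT]
    exact hgron.trans (by gcongr; linarith [hlarge 0 le_rfl])
  have hlim : Tendsto (fun T => x 0 * exp (θ * C - (1 - θ) * μ * T)) atTop (𝓝 0) := by
    have hneg : -((1 - θ) * μ) < 0 := by nlinarith
    have : Tendsto (fun T => θ * C - (1 - θ) * μ * T) atTop atBot :=
      (tendsto_atBot_add_const_left _ (θ * C) (tendsto_id.const_mul_atTop_of_neg hneg)).congr
        fun T => by simp only [id]; ring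
    simpa using (tendsto_exp_atBot.comp this).const_mul (x 0)
  obtain ⟨T, hTδ, hT⟩ := ((hlim.eventually (gt_mem_nhds hδ)).and (eventually_ge_atTop 0)).exists
  exact (hlarge T hT).not_ge ((hbound T hT).trans hTδ.le)

theorem tendsto_zero_of_deriv_le_mul {x x' a A w : ℝ → ℝ} {μ C : ℝ} (hμ : 0 < μ)
    (hA : Continuous A) (hA' : ∀ t, HasDerivWithinAt A (a t) (Ici t) t)
    (hA_le : ∀ s t, s ≤ t → A t - A s ≤ μ * (t - s) + C) (ha : ∀ t, 0 ≤ a t)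
    (hx : ∀ t ≥ 0, HasDerivAt x (x' t) t) (hx₀ : ∀ t ≥ 0, 0 ≤ x t)
    (hw : ∀ t ≥ 0, w t ≤ 1) (hw_lt : ∀ δ > 0, ∃ θ < 1, ∀ t ≥ 0, δ < x t → w t ≤ θ)
    (hle : ∀ t ≥ 0, x' t ≤ (w t * a t - μ) * x t) :
    Tendsto x atTop (𝓝 0) := by
  refine tendsto_order.2 ⟨fun ε hε => eventually_atTop.2 ⟨0, fun t ht => hε.trans_le (hx₀ t ht)⟩,
    fun ε hε => ?_⟩
  set δ := ε / 2 * exp (-C)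
  have hδ : 0 < δ := by positivity
  obtain ⟨θ, hθ, hwθ⟩ := hw_lt δ hδ
  obtain ⟨t₁, ht₁, hxt₁⟩ := exists_le_of_deriv_le_mul hμ (le_max_right θ 0) (max_lt hθ one_pos)
    hδ hA hA' hA_le hx fun t ht hxt => (hle t ht).trans <| by
      gcongr
      · exact hx₀ t ht
      · exact ha t
      · exact (hwθ t ht hxt).trans (le_max_left θ 0)
  refine eventually_atTop.2 ⟨t₁, fun t ht => ?_⟩
  have hgron := le_mul_exp_sub_of_hasDerivWithinAt (G := fun s => A s - μ * s) ht
    (fun s hs => (hx s (ht₁.trans hs.1)).continuousAt.continuousWithinAt)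
    (fun s hs => (hx s (ht₁.trans hs.1)).hasDerivWithinAt)
    (hA.sub (continuous_const.mul continuous_id)).continuousOn
    (fun s _ => (hA' s).sub ((hasDerivAt_id' s).const_mul μ).hasDerivWithinAt)
    (fun s hs => by
      have hs₀ := ht₁.trans hs.1
      have hwa : w s * a s ≤ a s := mul_le_of_le_one_left (ha s) (hw s hs₀)
      nlinarith [hle s hs₀, mul_le_mul_of_nonneg_right hwa (hx₀ s hs₀)])
  calc x t ≤ δ * exp C := by
        refine hgron.trans (mul_le_mul hxt₁ (exp_le_exp.2 ?_) (exp_pos _).le hδ.le)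
        linarith [hA_le t₁ t ht]
    _ < ε := by
        rw [mul_assoc, ← exp_add, neg_add_cancel, exp_zero]; linarith

theorem one_sub_exp_neg_mul_exp_sub_one (x : ℝ) :
    (1 - exp (-x)) * (exp x - 1) = 2 * (cosh x - 1) := by
  rw [cosh_eq, exp_neg]
  field_simp
  ring

theorem one_div_MSper (μS τ Λ t : ℝ) :
    1 / MSper μS τ Λ t = (1 - exp (-(μS * τ))) / (τ * Λ) * exp (μS * (t - ⌊t / τ⌋ * τ)) := by
  rw [MSper, one_div_div, div_mul_eq_div_div, div_eq_mul_inv _ (exp _), ← exp_neg, neg_neg]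

section release

variable {μS τ Λ : ℝ}

theorem one_sub_exp_neg_pos (hμS : 0 < μS) (hτ : 0 < τ) : 0 < 1 - exp (-(μS * τ)) :=
  sub_pos.2 (exp_lt_one_iff.2 (neg_lt_zero.2 (mul_pos hμS hτ)))

theorem MSper_pos (hμS : 0 < μS) (hτ : 0 < τ) (hΛ : 0 < Λ) (t : ℝ) : 0 < MSper μS τ Λ t := by
  have := one_sub_exp_neg_pos hμS hτ
  unfold MSper
  positivity

theorem MSper_le (hμS : 0 < μS) (hτ : 0 < τ) (hΛ : 0 ≤ Λ) (t : ℝ) :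
    MSper μS τ Λ t ≤ τ * Λ / (1 - exp (-(μS * τ))) := by
  have := one_sub_exp_neg_pos hμS hτ
  rw [MSper, div_le_div_iff_of_pos_right this]
  exact mul_le_of_le_one_right (by positivity)
    (exp_le_one_iff.2 (neg_nonpos.2 (mul_nonneg hμS.le (Int.sub_floor_div_mul_nonneg t hτ))))

theorem one_div_MSper_le (hμS : 0 < μS) (hτ : 0 < τ) (hΛ : 0 ≤ Λ) (t : ℝ) :
    1 / MSper μS τ Λ t ≤ (exp (μS * τ) - 1) / (τ * Λ) := by
  have := one_sub_exp_neg_pos hμS hτ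
  rw [one_div_MSper]
  calc (1 - exp (-(μS * τ))) / (τ * Λ) * exp (μS * (t - ⌊t / τ⌋ * τ))
      ≤ (1 - exp (-(μS * τ))) / (τ * Λ) * exp (μS * τ) := by
        gcongr; exact (Int.sub_floor_div_mul_lt t hτ).le
    _ = (exp (μS * τ) - 1) / (τ * Λ) := by
        rw [div_mul_eq_mul_div, sub_mul, ← exp_add]; simp

theorem tendsto_zero_of_deriv_le_div_MSper {c μ : ℝ} {x x' w : ℝ → ℝ} (hμS : 0 < μS)
    (hτ : 0 < τ) (hΛ : 0 < Λ) (hc : 0 ≤ c) (hμ : 0 < μ)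
    (hcrit : (cosh (μS * τ) - 1) / (μS * τ ^ 2) * (2 * c / μ) ≤ Λ)
    (hx : ∀ t ≥ 0, HasDerivAt x (x' t) t) (hx₀ : ∀ t ≥ 0, 0 ≤ x t)
    (hw : ∀ t ≥ 0, w t ≤ 1) (hw_lt : ∀ δ > 0, ∃ θ < 1, ∀ t ≥ 0, δ < x t → w t ≤ θ)
    (hle : ∀ t ≥ 0, x' t ≤ (w t * (c / MSper μS τ Λ t) - μ) * x t) :
    Tendsto x atTop (𝓝 0) := by
  set k := c * ((1 - exp (-(μS * τ))) / (τ * Λ))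
  have hk : 0 ≤ k := mul_nonneg hc (div_nonneg (one_sub_exp_neg_pos hμS hτ).le (by positivity))
  have ha : ∀ t, c / MSper μS τ Λ t = k * exp (μS * (t - ⌊t / τ⌋ * τ)) := fun t => by
    rw [div_eq_mul_one_div, one_div_MSper, mul_assoc]
  have hmean : k * ((exp (μS * τ) - 1) / μS) ≤ μ * τ := by
    have hid : k * ((exp (μS * τ) - 1) / μS) = c * (2 * (cosh (μS * τ) - 1)) / (τ * Λ * μS) := by
      rw [← one_sub_exp_neg_mul_exp_sub_one]
      simp only [k]
      field_simp
    rw [div_mul_div_comm, div_le_iff₀ (by positivity)] at hcrit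
    rw [hid, div_le_iff₀ (by positivity)]
    nlinarith
  refine tendsto_zero_of_deriv_le_mul (A := fun t => k * sawtoothExpPrimitive μS τ t)
    (C := 2 * (μ * τ)) hμ (continuous_const.mul (continuous_sawtoothExpPrimitive hτ.ne'))
    (fun t => by rw [ha]; exact (hasDerivWithinAt_sawtoothExpPrimitive hμS.ne' hτ t).const_mul k)
    (fun s t hst => ?_) (fun t => by rw [ha]; positivity) hx hx₀ hw hw_lt hle
  have hts : 0 ≤ (t - s) / τ + 2 := by have := div_nonneg (sub_nonneg.2 hst) hτ.le; linarith
  calc k * sawtoothExpPrimitive μS τ t - k * sawtoothExpPrimitive μS τ s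
      ≤ k * ((exp (μS * τ) - 1) / μS * ((t - s) / τ + 2)) := by
        rw [← mul_sub]; exact mul_le_mul_of_nonneg_left (sawtoothExpPrimitive_sub_le hμS hτ s t) hk
    _ ≤ μ * τ * ((t - s) / τ + 2) := by rw [← mul_assoc]; exact mul_le_mul_of_nonneg_right hmean hts
    _ = μ * (t - s) + 2 * (μ * τ) := by field_simp

end release

theorem div_add_le_div_add {a b c d : ℝ} (ha : 0 < a) (hab : a ≤ b) (hc : 0 < c) (hcd : c ≤ d) :
    a / (a + d) ≤ b / (b + c) := by
  rw [div_le_div_iff₀ (by linarith) (by linarith)]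
  nlinarith [mul_le_mul hab hcd hc.le (ha.le.trans hab)]

noncomputable def fertileBirths (β γ s m f : ℝ) : ℝ :=
  f * m / (m + γ * s) * exp (-(β * (m + f)))

section births

variable {β γ s m f c : ℝ}

theorem mul_exp_neg_mul_le (hβ : 0 < β) (y : ℝ) : y * exp (-(β * y)) ≤ 1 / (exp 1 * β) := by
  calc y * exp (-(β * y)) = β * y * exp (-(β * y)) / β := by field_simp
    _ ≤ exp (-1) / β := by gcongr; exact mul_exp_neg_le_exp_neg_one _
    _ = 1 / (exp 1 * β) := by rw [exp_neg, div_eq_mul_inv, one_div, mul_inv]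

theorem fertileBirths_le (hγs : 0 < γ * s) (hm : 0 ≤ m) (hf : 0 ≤ f) :
    fertileBirths β γ s m f ≤ f * exp (-(β * f)) * (m * exp (-(β * m))) / (γ * s) := by
  calc fertileBirths β γ s m f ≤ f * m * exp (-(β * (m + f))) / (γ * s) := by
        rw [fertileBirths, div_mul_eq_mul_div]
        exact div_le_div_of_nonneg_left (by positivity) hγs (by linarith)
    _ = f * exp (-(β * f)) * (m * exp (-(β * m))) / (γ * s) := by
        rw [show -(β * (m + f)) = -(β * f) + -(β * m) by ring, exp_add]; ring

theorem fertileBirths_le_min (hβ : 0 ≤ β) (hγs : 0 < γ * s) (hm : 0 ≤ m) (hf : 0 ≤ f) :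
    fertileBirths β γ s m f ≤ min m f * (m + f) / (γ * s) := by
  refine (fertileBirths_le hγs hm hf).trans (div_le_div_of_nonneg_right ?_ hγs.le)
  have hexp : ∀ y, 0 ≤ y → y * exp (-(β * y)) ≤ y := fun y hy =>
    mul_le_of_le_one_right hy (exp_le_one_iff.2 (by nlinarith))
  calc f * exp (-(β * f)) * (m * exp (-(β * m))) ≤ f * m :=
        mul_le_mul (hexp f hf) (hexp m hm) (by positivity) hf
    _ ≤ min m f * (m + f) := by
        rcases le_total m f with hmf | hfm
        · rw [min_eq_left hmf]; nlinarith
        · rw [min_eq_right hfm]; nlinarith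

theorem mul_fertileBirths_le_male (hβ : 0 < β) (hγ : 0 < γ) (hs : 0 < s) (hm : 0 ≤ m)
    (hf : 0 ≤ f) (hc : 0 ≤ c) :
    c * fertileBirths β γ s m f ≤ exp (-(β * m)) * (c / (exp 1 * β * γ) / s) * m := by
  calc c * fertileBirths β γ s m f
      ≤ c * (f * exp (-(β * f)) * (m * exp (-(β * m))) / (γ * s)) := by
        gcongr; exact fertileBirths_le (by positivity) hm hf
    _ ≤ c * (1 / (exp 1 * β) * (m * exp (-(β * m))) / (γ * s)) := by
        gcongr; exact mul_exp_neg_mul_le hβ f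
    _ = exp (-(β * m)) * (c / (exp 1 * β * γ) / s) * m := by field_simp

theorem mul_fertileBirths_le_female (hβ : 0 < β) (hγ : 0 < γ) (hs : 0 < s) (hm : 0 ≤ m)
    (hf : 0 ≤ f) (hc : 0 ≤ c) :
    c * fertileBirths β γ s m f ≤ exp (-(β * f)) * (c / (exp 1 * β * γ) / s) * f := by
  calc c * fertileBirths β γ s m f
      ≤ c * (f * exp (-(β * f)) * (m * exp (-(β * m))) / (γ * s)) := by
        gcongr; exact fertileBirths_le (by positivity) hm hf
    _ ≤ c * (f * exp (-(β * f)) * (1 / (exp 1 * β)) / (γ * s)) := by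
        gcongr; exact mul_exp_neg_mul_le hβ m
    _ = exp (-(β * f)) * (c / (exp 1 * β * γ) / s) * f := by field_simp

theorem mul_fertileBirths_le_total (hβ : 0 < β) (hγ : 0 < γ) (hs : 0 < s) (hm : 0 ≤ m)
    (hf : 0 ≤ f) (hc : 0 ≤ c) :
    c * fertileBirths β γ s m f ≤
      4 * γ * s / (4 * γ * s + (m + f)) * (c / 4 / (exp 1 * β * γ) / s) * (m + f) := by
  -- `(m + f)² (m + γs) - f m (4γs + m + f) = γs (m - f)² + m² (m + f)`
  have hpair : f * m / (m + γ * s) ≤ (m + f) ^ 2 / (4 * γ * s + (m + f)) := by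
    rw [div_le_div_iff₀ (by positivity) (by positivity)]
    nlinarith [mul_nonneg (mul_nonneg hγ.le hs.le) (sq_nonneg (m - f)),
      mul_nonneg (sq_nonneg m) (add_nonneg hm hf)]
  calc c * fertileBirths β γ s m f
      ≤ c * ((m + f) ^ 2 / (4 * γ * s + (m + f)) * exp (-(β * (m + f)))) := by
        unfold fertileBirths; gcongr
    _ = c * ((m + f) * ((m + f) * exp (-(β * (m + f)))) / (4 * γ * s + (m + f))) := by ring
    _ ≤ c * ((m + f) * (1 / (exp 1 * β)) / (4 * γ * s + (m + f))) := by
        gcongr; exact mul_exp_neg_mul_le hβ _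
    _ = 4 * γ * s / (4 * γ * s + (m + f)) * (c / 4 / (exp 1 * β * γ) / s) * (m + f) := by
        field_simp

end births

section model

variable {r ρ β μM μF μS γ τ Λ : ℝ} {M F : ℝ → ℝ}

theorem tendsto_zero_of_deriv_le_exp_neg_div_MSper {c μ : ℝ} {x x' : ℝ → ℝ} (hβ : 0 < β)
    (hμS : 0 < μS) (hτ : 0 < τ) (hΛ : 0 < Λ) (hc : 0 ≤ c) (hμ : 0 < μ)
    (hcrit : (cosh (μS * τ) - 1) / (μS * τ ^ 2) * (2 * c / μ) ≤ Λ)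
    (hx : ∀ t ≥ 0, HasDerivAt x (x' t) t) (hx₀ : ∀ t ≥ 0, 0 ≤ x t)
    (hle : ∀ t ≥ 0, x' t ≤ (exp (-(β * x t)) * (c / MSper μS τ Λ t) - μ) * x t) :
    Tendsto x atTop (𝓝 0) :=
  tendsto_zero_of_deriv_le_div_MSper hμS hτ hΛ hc hμ hcrit hx hx₀
    (fun t ht => exp_le_one_iff.2 (by nlinarith [hx₀ t ht]))
    (fun δ hδ => ⟨exp (-(β * δ)), exp_lt_one_iff.2 (by nlinarith),
      fun t _ hδx => exp_le_exp.2 (by nlinarith)⟩) hle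

theorem threshold_cases {K : ℝ} (hr₁ : r < 1) (hρ : 0 < ρ) (hμF : 0 < μF) (hK : 0 ≤ K)
    (hΛ : Λ ≥ K * min (2 * (r * ρ / μM))
        (min (2 * ((1 - r) * ρ / μF))
          (max r (1 - r) * max ((r * ρ / μM) / r) (((1 - r) * ρ / μF) / (1 - r))))) :
    K * (2 * (r * ρ / μM)) ≤ Λ ∨ K * (2 * ((1 - r) * ρ / μF)) ≤ Λ ∨
      K * (1 / 2 * (ρ / μF)) ≤ Λ := by
  rw [ge_iff_le, mul_min_of_nonneg _ _ hK, mul_min_of_nonneg _ _ hK, min_le_iff,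
    min_le_iff] at hΛ
  refine hΛ.imp_right (Or.imp_right fun h => le_trans ?_ h)
  have hhalf : 1 / 2 ≤ max r (1 - r) := by
    rcases le_total r (1 - r) with h | h
    · exact (le_max_right _ _).trans' (by linarith)
    · exact (le_max_left _ _).trans' (by linarith)
  have hF : ρ / μF ≤ max ((r * ρ / μM) / r) (((1 - r) * ρ / μF) / (1 - r)) :=
    (le_max_right _ _).trans' (le_of_eq (by field_simp [(by linarith : (1 - r) ≠ 0)]))
  gcongr

theorem tendsto_total_zero (hρ : 0 < ρ) (hβ : 0 < β) (hμF : 0 < μF) (hμS : 0 < μS)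
    (hγ : 0 < γ) (hμ : μF ≤ μM) (hτ : 0 < τ) (hΛ : 0 < Λ)
    (hcrit : (cosh (μS * τ) - 1) / (μS * τ ^ 2) * (1 / (exp 1 * β * γ)) * (1 / 2 * (ρ / μF)) ≤ Λ)
    (hM₀ : ∀ t ≥ 0, 0 ≤ M t) (hF₀ : ∀ t ≥ 0, 0 ≤ F t)
    (hM : ∀ t ≥ 0, HasDerivAt M
      (r * ρ * fertileBirths β γ (MSper μS τ Λ t) (M t) (F t) - μM * M t) t)
    (hF : ∀ t ≥ 0, HasDerivAt F
      ((1 - r) * ρ * fertileBirths β γ (MSper μS τ Λ t) (M t) (F t) - μF * F t) t) :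
    Tendsto (fun t => M t + F t) atTop (𝓝 0) := by
  have hS := MSper_pos hμS hτ hΛ
  set Smax := τ * Λ / (1 - exp (-(μS * τ)))
  have hSmax := MSper_le hμS hτ hΛ.le
  have hN₀ : ∀ t ≥ 0, 0 ≤ M t + F t := fun t ht => add_nonneg (hM₀ t ht) (hF₀ t ht)
  refine tendsto_zero_of_deriv_le_div_MSper (c := ρ / 4 / (exp 1 * β * γ))
    (w := fun t => 4 * γ * MSper μS τ Λ t / (4 * γ * MSper μS τ Λ t + (M t + F t)))
    hμS hτ hΛ (by positivity) hμF (le_of_eq_of_le (by ring) hcrit)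
    (fun t ht => (hM t ht).add (hF t ht)) hN₀
    (fun t ht => div_le_one_of_le₀ (le_add_of_nonneg_right (hN₀ t ht))
      (add_nonneg (by have := hS t; positivity) (hN₀ t ht)))
    (fun δ hδ => ⟨4 * γ * Smax / (4 * γ * Smax + δ), ?_, fun t _ hδx => ?_⟩) fun t ht => ?_
  · have := (hS 0).trans_le (hSmax 0)
    rw [div_lt_one (by positivity)]
    linarith
  · exact div_add_le_div_add (by have := hS t; positivity) (by have := hSmax t; nlinarith) hδ
      hδx.le
  · have hbirths := mul_fertileBirths_le_total (c := ρ) hβ hγ (hS t) (hM₀ t ht) (hF₀ t ht)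
      hρ.le
    have hmort := mul_le_mul_of_nonneg_right hμ (hM₀ t ht)
    linarith

theorem tendsto_min_zero (hr₀ : 0 < r) (hr₁ : r < 1) (hρ : 0 < ρ) (hβ : 0 < β)
    (hμM : 0 < μM) (hμF : 0 < μF) (hμS : 0 < μS) (hγ : 0 < γ) (hμ : μF ≤ μM) (hτ : 0 < τ)
    (hΛ : 0 < Λ)
    (hthreshold :
      (cosh (μS * τ) - 1) / (μS * τ ^ 2) * (1 / (exp 1 * β * γ)) * (2 * (r * ρ / μM)) ≤ Λ ∨
      (cosh (μS * τ) - 1) / (μS * τ ^ 2) * (1 / (exp 1 * β * γ)) *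
        (2 * ((1 - r) * ρ / μF)) ≤ Λ ∨
      (cosh (μS * τ) - 1) / (μS * τ ^ 2) * (1 / (exp 1 * β * γ)) * (1 / 2 * (ρ / μF)) ≤ Λ)
    (hM₀ : ∀ t ≥ 0, 0 ≤ M t) (hF₀ : ∀ t ≥ 0, 0 ≤ F t)
    (hM : ∀ t ≥ 0, HasDerivAt M
      (r * ρ * fertileBirths β γ (MSper μS τ Λ t) (M t) (F t) - μM * M t) t)
    (hF : ∀ t ≥ 0, HasDerivAt F
      ((1 - r) * ρ * fertileBirths β γ (MSper μS τ Λ t) (M t) (F t) - μF * F t) t) :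
    Tendsto (fun t => min (M t) (F t)) atTop (𝓝 0) := by
  have hS := MSper_pos hμS hτ hΛ
  have hmin₀ : ∀ᶠ t in atTop, 0 ≤ min (M t) (F t) :=
    eventually_atTop.2 ⟨0, fun t ht => le_min (hM₀ t ht) (hF₀ t ht)⟩
  rcases hthreshold with h | h | h
  · refine squeeze_zero' hmin₀ (.of_forall fun t => min_le_left _ _) ?_
    refine tendsto_zero_of_deriv_le_exp_neg_div_MSper (c := r * ρ / (exp 1 * β * γ)) hβ hμS hτ
      hΛ (by positivity) hμM (le_of_eq_of_le (by ring) h) hM hM₀ fun t ht => ?_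
    rw [sub_mul _ _ (M t)]
    exact sub_le_sub_right
      (mul_fertileBirths_le_male (c := r * ρ) hβ hγ (hS t) (hM₀ t ht) (hF₀ t ht) (by positivity)) _
  · refine squeeze_zero' hmin₀ (.of_forall fun t => min_le_right _ _) ?_
    refine tendsto_zero_of_deriv_le_exp_neg_div_MSper (c := (1 - r) * ρ / (exp 1 * β * γ)) hβ
      hμS hτ hΛ (div_nonneg (by nlinarith) (by positivity)) hμF (le_of_eq_of_le (by ring) h)
      hF hF₀ fun t ht => ?_
    rw [sub_mul _ _ (F t)]
    exact sub_le_sub_right (mul_fertileBirths_le_female (c := (1 - r) * ρ) hβ hγ (hS t)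
      (hM₀ t ht) (hF₀ t ht) (mul_nonneg (by linarith) hρ.le)) _
  · exact squeeze_zero' hmin₀ (eventually_atTop.2 ⟨0, fun t ht =>
      (min_le_left _ _).trans (le_add_of_nonneg_right (hF₀ t ht))⟩)
      (tendsto_total_zero hρ hβ hμF hμS hγ hμ hτ hΛ h hM₀ hF₀ hM hF)

theorem exists_deriv_add_le_neg_mul (hρ : 0 < ρ) (hβ : 0 < β) (hμF : 0 < μF) (hμS : 0 < μS)
    (hγ : 0 < γ) (hμ : μF ≤ μM) (hτ : 0 < τ) (hΛ : 0 < Λ)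
    (hM₀ : ∀ t ≥ 0, 0 ≤ M t) (hF₀ : ∀ t ≥ 0, 0 ≤ F t)
    (hmin : Tendsto (fun t => min (M t) (F t)) atTop (𝓝 0)) :
    ∃ t₁ ≥ 0, ∀ t ≥ t₁,
      (r * ρ * fertileBirths β γ (MSper μS τ Λ t) (M t) (F t) - μM * M t) +
        ((1 - r) * ρ * fertileBirths β γ (MSper μS τ Λ t) (M t) (F t) - μF * F t) ≤
      -(μF / 2) * (M t + F t) := by
  set B := (exp (μS * τ) - 1) / (τ * Λ)
  have hB : 0 < B := div_pos (sub_pos.2 (one_lt_exp_iff.2 (by positivity))) (by positivity)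
  set δ := μF * γ / (2 * ρ * B)
  obtain ⟨t₁, ht₁⟩ := eventually_atTop.1 (hmin.eventually (eventually_le_nhds
    (show 0 < δ by positivity)))
  refine ⟨max t₁ 0, le_max_right _ _, fun t ht => ?_⟩
  have ht₀ : 0 ≤ t := (le_max_right _ _).trans ht
  have hS := MSper_pos hμS hτ hΛ t
  have hmin₀ : 0 ≤ min (M t) (F t) := le_min (hM₀ t ht₀) (hF₀ t ht₀)
  have hN₀ : 0 ≤ M t + F t := add_nonneg (hM₀ t ht₀) (hF₀ t ht₀)
  have hbirths : ρ * fertileBirths β γ (MSper μS τ Λ t) (M t) (F t) ≤ μF / 2 * (M t + F t) :=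
    calc ρ * fertileBirths β γ (MSper μS τ Λ t) (M t) (F t)
        ≤ ρ * (min (M t) (F t) * (M t + F t) / (γ * MSper μS τ Λ t)) := by
          gcongr; exact fertileBirths_le_min hβ.le (by positivity) (hM₀ t ht₀) (hF₀ t ht₀)
      _ = ρ * min (M t) (F t) * (M t + F t) * (1 / MSper μS τ Λ t) / γ := by ring
      _ ≤ ρ * δ * (M t + F t) * B / γ := by
          gcongr ρ * ?_ * _ * ?_ / _
          · exact ht₁ t ((le_max_left _ _).trans ht)
          · exact one_div_MSper_le hμS hτ hΛ.le t
      _ = μF / 2 * (M t + F t) := by simp only [δ]; field_simp [hB.ne']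
  have hmort := mul_le_mul_of_nonneg_right hμ (hM₀ t ht₀)
  linarith

end model

theorem stmt_9 (r ρ β μM μF μS γ τ Λ : ℝ)
    (hr0 : 0 < r) (hr1 : r < 1) (hρ : 0 < ρ) (hβ : 0 < β)
    (hμM : 0 < μM) (hμF : 0 < μF) (hμS : 0 < μS) (hγ : 0 < γ)
    (hμ : μF ≤ μM) (hτ : 0 < τ)
    (hΛ : Λ ≥ ((Real.cosh (μS * τ) - 1) / (μS * τ ^ 2)) * (1 / (Real.exp 1 * β * γ)) *
      min (2 * (r * ρ / μM))
        (min (2 * ((1 - r) * ρ / μF))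
          (max r (1 - r) * max ((r * ρ / μM) / r) (((1 - r) * ρ / μF) / (1 - r)))))
    (M F : ℝ → ℝ)
    (hMnn : ∀ t, 0 ≤ t → 0 ≤ M t) (hFnn : ∀ t, 0 ≤ t → 0 ≤ F t)
    (hdM : ∀ t, 0 ≤ t →
      HasDerivAt M (r * ρ * (F t * M t / (M t + γ * MSper μS τ Λ t)) *
        Real.exp (-(β * (M t + F t))) - μM * M t) t)
    (hdF : ∀ t, 0 ≤ t →
      HasDerivAt F ((1 - r) * ρ * (F t * M t / (M t + γ * MSper μS τ Λ t)) *
        Real.exp (-(β * (M t + F t))) - μF * F t) t) :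
    ∃ C > 0, ∃ ε > 0, ∀ t, 0 ≤ t → M t + F t ≤ C * Real.exp (-(ε * t)) := by
  have hK : 0 < (cosh (μS * τ) - 1) / (μS * τ ^ 2) * (1 / (exp 1 * β * γ)) :=
    mul_pos (div_pos (sub_pos.2 (one_lt_cosh.2 (by positivity))) (by positivity)) (by positivity)
  have hthreshold := threshold_cases hr1 hρ hμF hK.le hΛ
  have hΛpos : 0 < Λ := by
    rcases hthreshold with h | h | h <;> exact lt_of_lt_of_le (by positivity) h
  have hM : ∀ t ≥ 0, HasDerivAt M
      (r * ρ * fertileBirths β γ (MSper μS τ Λ t) (M t) (F t) - μM * M t) t :=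
    fun t ht => (hdM t ht).congr_deriv (by rw [fertileBirths]; ring)
  have hF : ∀ t ≥ 0, HasDerivAt F
      ((1 - r) * ρ * fertileBirths β γ (MSper μS τ Λ t) (M t) (F t) - μF * F t) t :=
    fun t ht => (hdF t ht).congr_deriv (by rw [fertileBirths]; ring)
  obtain ⟨t₁, ht₁, hdecay⟩ := exists_deriv_add_le_neg_mul (r := r) hρ hβ hμF hμS hγ hμ hτ hΛpos hMnn
    hFnn (tendsto_min_zero hr0 hr1 hρ hβ hμM hμF hμS hγ hμ hτ hΛpos hthreshold hMnn hFnn hM hF)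
  obtain ⟨C, hC, hbound⟩ := exists_le_mul_exp_of_deriv_le (by positivity) ht₁
    (fun t ht => (hM t ht).add (hF t ht)) hdecay
  exact ⟨C, hC, μF / 2, by positivity, hbound⟩
end
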